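/- arXiv:1606.06172 — 7 statements merged into one kernel-verified Lean document; each statement's English description precedes it below -/
import Mathlib

section
/- For any n ≥ 1, the set D_n of Dyck words of length 2n and the set D_n^- of bitstrings of length 2n with weight n that have exactly one prefix with more 0s than 1s have the same cardinality. -/
/-- A bitstring is a Dyck word if it has as many 1s (`true`) as 0s (`false`) and
every prefix has at least as many 1s as 0s. -/
def isDyck (x : List Bool) : Prop :=
  x.count true = x.count false ∧
  ∀ k : ℕ, (x.take k).count false ≤ (x.take k).count true

/-- The set `D_n` of Dyck words of length `2n`. -/
def dyckWords (n : ℕ) : Set (List Bool) := {x | x.length = 2 * n ∧ isDyck x}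

/-- The set `D_n^-` of bitstrings of length `2n` with weight `n` having exactly one
prefix with strictly more 0s than 1s. -/
def dyckWordsMinus (n : ℕ) : Set (List Bool) :=
  {x | x.length = 2 * n ∧ x.count true = n ∧
    ((Finset.range (2 * n + 1)).filter
      (fun k => (x.take k).count true < (x.take k).count false)).card = 1}

/-! Reading `true` as an up step and `false` as a down step, a nonempty Dyck word factors
uniquely as `1 a 0 b` with `a`, `b` Dyck words (cut at its first return to height zero), and a
word of `D_n^-` factors uniquely as `a 0 1 b` with `a`, `b` Dyck words (cut around its unique
negative prefix `a 0`). Both sets are therefore in bijection with the pairs of Dyck words of total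
length `2n - 2`. -/

namespace Bitstring

def height (x : List Bool) : ℤ := (x.count true : ℤ) - x.count false

@[simp] lemma height_nil : height [] = 0 := rfl

@[simp] lemma height_cons_true (x : List Bool) : height (true :: x) = 1 + height x := by
  simp [height, add_sub_right_comm, add_comm]

@[simp] lemma height_cons_false (x : List Bool) : height (false :: x) = -1 + height x := by
  simp [height, sub_add_eq_sub_sub, neg_add_eq_sub]

@[simp] lemma height_append (x y : List Bool) : height (x ++ y) = height x + height y := by
  simp only [height, List.count_append]; push_cast; ring

lemma height_take_length_add_append (x y : List Bool) (m : ℕ) :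
    height ((x ++ y).take (x.length + m)) = height x + height (y.take m) := by
  rw [List.take_length_add_append, height_append]

lemma height_neg_iff {x : List Bool} : height x < 0 ↔ x.count true < x.count false := by
  simp [height]

lemma height_eq_zero_iff {x : List Bool} {n : ℕ} (hx : x.length = 2 * n) :
    height x = 0 ↔ x.count true = n := by
  have := List.count_true_add_count_false x
  simp only [height, sub_eq_zero, Nat.cast_inj]
  omega

lemma lt_length_of_height_take_neg {w : List Bool} (h0 : height w = 0) {i : ℕ}
    (hi : height (w.take i) < 0) : i < w.length := by
  by_contra! hle
  rw [List.take_of_length_le hle, h0] at hi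
  exact hi.false

lemma isDyck_iff {x : List Bool} :
    isDyck x ↔ height x = 0 ∧ ∀ k, 0 ≤ height (x.take k) := by
  simp only [isDyck, height, sub_eq_zero, sub_nonneg, Nat.cast_inj, Nat.cast_le]

lemma isDyck_take_and_eq_append_false_cons {w : List Bool} {k : ℕ}
    (hnn : ∀ m ≤ k, 0 ≤ height (w.take m)) (hneg : height (w.take (k + 1)) < 0) :
    isDyck (w.take k) ∧ w = w.take k ++ false :: w.drop (k + 1) := by
  have hk : k < w.length := by
    by_contra! hle
    rw [List.take_of_length_le (by omega), ← List.take_of_length_le hle] at hneg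
    exact (hnn k le_rfl).not_gt hneg
  have hk0 := hnn k le_rfl
  rw [List.take_succ_eq_append_getElem hk, height_append] at hneg
  have hwk : w[k] = false := by
    cases h : w[k]
    · rfl
    · simp only [h, height_cons_true, height_nil] at hneg; omega
  simp only [hwk, height_cons_false, height_nil] at hneg
  refine ⟨isDyck_iff.2 ⟨by omega, fun m => ?_⟩, ?_⟩
  · rw [List.take_take]
    exact hnn _ (min_le_right _ _)
  · conv_lhs => rw [← List.take_append_drop k w, ← List.getElem_cons_drop hk, hwk]

lemma exists_isDyck_append_false_cons {w : List Bool} (h : ∃ i, height (w.take i) < 0) :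
    ∃ a r, isDyck a ∧ w = a ++ false :: r := by
  classical
  obtain ⟨k, hk⟩ : ∃ k, Nat.find h = k + 1 :=
    Nat.exists_eq_succ_of_ne_zero fun h0 => by simpa [h0] using Nat.find_spec h
  have hneg := Nat.find_spec h
  rw [hk] at hneg
  have hnn : ∀ m ≤ k, 0 ≤ height (w.take m) := fun m hm =>
    not_lt.1 (Nat.find_min h (by omega))
  exact ⟨_, _, isDyck_take_and_eq_append_false_cons hnn hneg⟩

lemma length_le_of_append_false_cons_eq {a a' b b' : List Bool} (ha : isDyck a)
    (ha' : isDyck a') (h : a ++ false :: b = a' ++ false :: b') : a.length ≤ a'.length := by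
  by_contra! hlt
  have key := congrArg (fun w => height (w.take (a'.length + 1))) h
  simp only [List.take_append_of_le_length hlt, height_take_length_add_append] at key
  have := (isDyck_iff.1 ha).2 (a'.length + 1)
  simp only [Nat.succ_eq_add_one, (isDyck_iff.1 ha').1, List.take_succ_cons, List.take_zero,
    height_cons_false, height_nil, add_zero, zero_add] at key
  omega

lemma append_false_cons_inj {a a' b b' : List Bool} (ha : isDyck a) (ha' : isDyck a')
    (h : a ++ false :: b = a' ++ false :: b') : a = a' ∧ b = b' := by
  have hlen := le_antisymm (length_le_of_append_false_cons_eq ha ha' h)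
    (length_le_of_append_false_cons_eq ha' ha h.symm)
  simpa using List.append_inj h hlen

lemma mem_dyckWordsMinus_iff {n : ℕ} {w : List Bool} :
    w ∈ dyckWordsMinus n ↔
      w.length = 2 * n ∧ height w = 0 ∧ ∃ j, ∀ i, height (w.take i) < 0 ↔ i = j := by
  simp only [dyckWordsMinus, Set.mem_ofPred_eq, Finset.card_eq_one, Finset.ext_iff,
    Finset.mem_filter, Finset.mem_range, Finset.mem_singleton, ← height_neg_iff]
  constructor
  · rintro ⟨hlen, hcount, j, hj⟩
    have h0 := (height_eq_zero_iff hlen).2 hcount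
    refine ⟨hlen, h0, j,
      fun i => ⟨fun hi => (hj i).1 ⟨?_, hi⟩, fun hi => ((hj i).2 hi).2⟩⟩
    have := lt_length_of_height_take_neg h0 hi
    omega
  · rintro ⟨hlen, h0, j, hj⟩
    refine ⟨hlen, (height_eq_zero_iff hlen).1 h0, j,
      fun i => ⟨fun hi => (hj i).1 hi.2, fun hi => ⟨?_, (hj i).2 hi⟩⟩⟩
    have := lt_length_of_height_take_neg h0 ((hj i).2 hi)
    omega

def dyckPairs (n : ℕ) : Set (List Bool × List Bool) :=
  {p | isDyck p.1 ∧ isDyck p.2 ∧ p.1.length + p.2.length + 2 = 2 * n}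

def joinDyck (p : List Bool × List Bool) : List Bool := true :: (p.1 ++ false :: p.2)

def joinDip (p : List Bool × List Bool) : List Bool := p.1 ++ false :: true :: p.2

lemma injOn_joinDyck (n : ℕ) : Set.InjOn joinDyck (dyckPairs n) := by
  rintro ⟨a, b⟩ ⟨ha, -, -⟩ ⟨a', b'⟩ ⟨ha', -, -⟩ h
  obtain ⟨rfl, rfl⟩ := append_false_cons_inj ha ha' (List.cons.inj h).2
  rfl

lemma injOn_joinDip (n : ℕ) : Set.InjOn joinDip (dyckPairs n) := by
  rintro ⟨a, b⟩ ⟨ha, -, -⟩ ⟨a', b'⟩ ⟨ha', -, -⟩ h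
  obtain ⟨rfl, h'⟩ := append_false_cons_inj ha ha' h
  obtain ⟨-, rfl⟩ := List.cons.inj h'
  rfl

lemma isDyck_joinDyck {a b : List Bool} (ha : isDyck a) (hb : isDyck b) :
    isDyck (joinDyck (a, b)) := by
  rw [isDyck_iff] at ha hb ⊢
  refine ⟨by simp [joinDyck, ha.1, hb.1], fun k => ?_⟩
  rcases k with _ | m
  · simp
  simp only [joinDyck, List.take_succ_cons, height_cons_true]
  rcases le_or_gt m a.length with hm | hm
  · rw [List.take_append_of_le_length hm]
    linarith [ha.2 m]
  · obtain ⟨m', rfl⟩ := Nat.exists_eq_add_of_lt hm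
    rw [add_assoc, height_take_length_add_append]
    simp [ha.1]
    linarith [hb.2 m']

lemma height_take_joinDip_neg_iff {a b : List Bool} (ha : isDyck a) (hb : isDyck b) (i : ℕ) :
    height ((joinDip (a, b)).take i) < 0 ↔ i = a.length + 1 := by
  rw [isDyck_iff] at ha hb
  rcases le_or_gt i a.length with hi | hi
  · rw [joinDip, List.take_append_of_le_length hi]
    simp only [not_lt.2 (ha.2 i), false_iff]
    omega
  · obtain ⟨m, rfl⟩ := Nat.exists_eq_add_of_lt hi
    rw [joinDip, add_assoc, height_take_length_add_append]
    rcases m with _ | _ | m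
    · simp [ha.1]
    · simp [ha.1]
    · simpa [ha.1] using hb.2 (m + 1)

lemma dyckWords_subset_image {n : ℕ} (hn : 1 ≤ n) :
    dyckWords n ⊆ joinDyck '' dyckPairs n := by
  rintro x ⟨hlen, hx⟩
  obtain ⟨h0, hnn⟩ := isDyck_iff.1 hx
  rcases x with _ | ⟨c, y⟩
  · simp only [List.length_nil] at hlen; omega
  obtain rfl : c = true := by
    have := hnn 1
    cases c
    · simp at this
    · rfl
  have hy : ∀ m, -1 ≤ height (y.take m) := fun m => by
    have := hnn (m + 1)
    simp only [List.take_succ_cons, height_cons_true] at this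
    linarith
  simp only [height_cons_true] at h0
  obtain ⟨a, r, ha, rfl⟩ := exists_isDyck_append_false_cons
    ⟨y.length, by rw [List.take_length]; omega⟩
  have ha0 := (isDyck_iff.1 ha).1
  refine ⟨(a, r), ⟨ha, isDyck_iff.2 ⟨?_, fun m => ?_⟩, ?_⟩, rfl⟩
  · simp only [height_append, height_cons_false, ha0] at h0; linarith
  · have := hy (a.length + (m + 1))
    rw [height_take_length_add_append] at this
    simp only [List.take_succ_cons, height_cons_false, ha0] at this
    linarith
  · simp only [List.length_cons, List.length_append] at hlen ⊢; omega

lemma mapsTo_joinDyck (n : ℕ) : Set.MapsTo joinDyck (dyckPairs n) (dyckWords n) := by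
  rintro ⟨a, b⟩ ⟨ha, hb, hlen⟩
  refine ⟨?_, isDyck_joinDyck ha hb⟩
  simp only [joinDyck, List.length_cons, List.length_append] at hlen ⊢
  omega

lemma dyckWordsMinus_subset_image (n : ℕ) : dyckWordsMinus n ⊆ joinDip '' dyckPairs n := by
  intro w hw
  obtain ⟨hlen, h0, j, hj⟩ := mem_dyckWordsMinus_iff.1 hw
  obtain ⟨a, r, ha, rfl⟩ := exists_isDyck_append_false_cons ⟨j, (hj j).2 rfl⟩
  have ha0 := (isDyck_iff.1 ha).1
  have hj' : j = a.length + 1 := ((hj _).1 (by simp [height_take_length_add_append, ha0])).symm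
  have hr : ∀ m, 0 ≤ -1 + height (r.take (m + 1)) := fun m => by
    have := (hj (a.length + (m + 2))).not.2 (by omega)
    rw [not_lt, height_take_length_add_append] at this
    simpa [ha0] using this
  rcases r with _ | ⟨c, b⟩
  · simp [ha0] at h0
  obtain rfl : c = true := by
    have := hr 0
    cases c
    · simp at this
    · rfl
  refine ⟨(a, b), ⟨ha, isDyck_iff.2 ⟨?_, fun m => ?_⟩, ?_⟩, rfl⟩
  · simp only [height_append, height_cons_false, height_cons_true, ha0] at h0; linarith
  · have := hr m
    simp only [List.take_succ_cons, height_cons_true] at this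
    linarith
  · simp only [List.length_append, List.length_cons] at hlen ⊢; omega

lemma mapsTo_joinDip (n : ℕ) : Set.MapsTo joinDip (dyckPairs n) (dyckWordsMinus n) := by
  rintro ⟨a, b⟩ ⟨ha, hb, hlen⟩
  refine mem_dyckWordsMinus_iff.2 ⟨?_, ?_, _, height_take_joinDip_neg_iff ha hb⟩
  · simp only [joinDip, List.length_append, List.length_cons] at hlen ⊢
    omega
  · simp [joinDip, (isDyck_iff.1 ha).1, (isDyck_iff.1 hb).1]

end Bitstring

/-- `D_n` and `D_n^-` have the same cardinality. -/
theorem stmt_2 (n : ℕ) (hn : 1 ≤ n) :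
    (dyckWords n).ncard = (dyckWordsMinus n).ncard := by
  have hDyck : dyckWords n = Bitstring.joinDyck '' Bitstring.dyckPairs n :=
    (Bitstring.dyckWords_subset_image hn).antisymm (Bitstring.mapsTo_joinDyck n).image_subset
  have hMinus : dyckWordsMinus n = Bitstring.joinDip '' Bitstring.dyckPairs n :=
    (Bitstring.dyckWordsMinus_subset_image n).antisymm (Bitstring.mapsTo_joinDip n).image_subset
  rw [hDyck, hMinus, (Bitstring.injOn_joinDyck n).ncard_image,
    (Bitstring.injOn_joinDip n).ncard_image]
end

section
/- Every bitstring x of length 2n (n ≥ 1) with weight n that has exactly one prefix with strictly more 0s than 1s can be written uniquely as x = u01v where u and v are Dyck words. -/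
def NegativeAt (x : List Bool) (k : ℕ) : Prop :=
  (x.take k).count true < (x.take k).count false

lemma not_negativeAt_zero (x : List Bool) : ¬ NegativeAt x 0 := by
  simp [NegativeAt]

lemma not_negativeAt_of_length_le {x : List Bool} (hx : x.count true = x.count false) {k : ℕ}
    (hk : x.length ≤ k) : ¬ NegativeAt x k := by
  rw [NegativeAt, List.take_of_length_le hk]
  omega

lemma negativeAt_length_add_one {u : List Bool} (hu : u.count true = u.count false)
    (w : List Bool) : NegativeAt (u ++ false :: w) (u.length + 1) := by
  rw [NegativeAt, List.take_length_add_append]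
  simp [hu]

lemma eq_false_and_eq_true_of_isolated_negativeAt {u v : List Bool} {a b : Bool}
    (hbefore : ¬ NegativeAt (u ++ a :: b :: v) u.length)
    (hat : NegativeAt (u ++ a :: b :: v) (u.length + 1))
    (hafter : ¬ NegativeAt (u ++ a :: b :: v) (u.length + 2)) :
    u.count true = u.count false ∧ a = false ∧ b = true := by
  simp only [NegativeAt, List.take_left', List.take_length_add_append] at hbefore hat hafter
  cases a <;> cases b <;> simp [List.count_append] at hbefore hat hafter ⊢ <;> omega

lemma isDyck_of_forall_ne_not_negativeAt {u v : List Bool} (hu : u.count true = u.count false)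
    (hx : (u ++ false :: true :: v).count true = (u ++ false :: true :: v).count false)
    (h : ∀ k ≠ u.length + 1, ¬ NegativeAt (u ++ false :: true :: v) k) :
    isDyck u ∧ isDyck v := by
  refine ⟨⟨hu, fun k => ?_⟩, ⟨?_, fun k => ?_⟩⟩
  · have := h (min k u.length) (by omega)
    rw [NegativeAt, ← List.take_take, List.take_left' rfl] at this
    omega
  · simp only [List.count_append, List.count_cons_self, List.count_cons_of_ne,
      Bool.false_eq_true, Bool.true_eq_false, ne_eq, not_false_eq_true] at hx
    omega
  · have := h (u.length + (k + 2)) (by omega)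
    rw [NegativeAt, List.take_length_add_append] at this
    simp only [List.take_succ_cons, List.count_append, List.count_cons_self,
      List.count_cons_of_ne, Bool.false_eq_true, Bool.true_eq_false, ne_eq, not_false_eq_true,
      not_lt] at this
    omega

lemma length_le_of_append_false_eq {u u' v v' : List Bool} (hu : u.count true = u.count false)
    (hu' : isDyck u') (h : u ++ false :: v = u' ++ false :: v') : u'.length ≤ u.length := by
  by_contra! hlt
  have hneg := negativeAt_length_add_one hu v
  rw [h, NegativeAt, List.take_append_of_le_length hlt] at hneg
  exact (hu'.2 _).not_gt hneg

lemma exists_isDyck_split_of_negativeAt_iff {x : List Bool} {m : ℕ}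
    (hx : x.count true = x.count false) (hneg : ∀ k, NegativeAt x k ↔ k = m) :
    ∃ u v, isDyck u ∧ isDyck v ∧ x = u ++ [false, true] ++ v := by
  have hm0 : m ≠ 0 := fun h => not_negativeAt_zero x ((hneg 0).mpr h.symm)
  have hmlen : m < x.length :=
    not_le.mp fun h => not_negativeAt_of_length_le hx h ((hneg m).mpr rfl)
  obtain ⟨j, rfl⟩ := Nat.exists_eq_succ_of_ne_zero hm0
  obtain ⟨u, a, b, v, rfl, rfl⟩ : ∃ u a b v, x = u ++ a :: b :: v ∧ u.length = j :=
    ⟨x.take j, x[j], x[j + 1], x.drop (j + 2), by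
      rw [← List.drop_eq_getElem_cons, ← List.drop_eq_getElem_cons, List.take_append_drop],
      by rw [List.length_take]; omega⟩
  obtain ⟨hu, rfl, rfl⟩ := eq_false_and_eq_true_of_isolated_negativeAt
    (by rw [hneg]; omega) ((hneg _).mpr rfl) (by rw [hneg]; omega)
  obtain ⟨hu, hv⟩ := isDyck_of_forall_ne_not_negativeAt hu hx fun k hk => by rwa [hneg]
  exact ⟨u, v, hu, hv, by simp⟩

theorem stmt_4_general (n : ℕ) (x : List Bool)
    (hlen : x.length = 2 * n) (hw : x.count true = n)
    (hone : ((Finset.range (2 * n + 1)).filter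
      (fun k => (x.take k).count true < (x.take k).count false)).card = 1) :
    ∃! p : List Bool × List Bool,
      isDyck p.1 ∧ isDyck p.2 ∧ x = p.1 ++ [false, true] ++ p.2 := by
  have hx : x.count true = x.count false := by
    have := List.count_true_add_count_false x
    omega
  obtain ⟨m, hm⟩ := Finset.card_eq_one.mp hone
  have hm_le : m ≤ 2 * n := Nat.lt_succ_iff.mp
    (Finset.mem_range.mp (Finset.mem_filter.mp (hm ▸ Finset.mem_singleton_self m)).1)
  have hneg : ∀ k, NegativeAt x k ↔ k = m := by
    intro k
    rcases le_or_gt k (2 * n) with hk | hk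
    · rw [← Finset.mem_singleton, ← hm, Finset.mem_filter, Finset.mem_range]
      exact ⟨fun h => ⟨by omega, h⟩, And.right⟩
    · exact iff_of_false (not_negativeAt_of_length_le hx (by omega)) (by omega)
  obtain ⟨u, v, hu, hv, rfl⟩ := exists_isDyck_split_of_negativeAt_iff hx hneg
  refine ⟨(u, v), ⟨hu, hv, rfl⟩, ?_⟩
  rintro ⟨u', v'⟩ ⟨hu', -, h⟩
  have h' : u ++ false :: true :: v = u' ++ false :: true :: v' := by simpa using h
  have hlen' : u.length = u'.length :=
    le_antisymm (length_le_of_append_false_eq hu'.1 hu h'.symm)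
      (length_le_of_append_false_eq hu.1 hu' h')
  obtain ⟨rfl, ⟨⟩⟩ := List.append_inj h' hlen'
  rfl

/-- Every bitstring of length `2n` (`n ≥ 1`) with weight `n` having exactly one prefix
with strictly more 0s than 1s can be written uniquely as `u01v` with `u`, `v` Dyck words. -/
theorem stmt_4 (n : ℕ) (hn : 1 ≤ n) (x : List Bool)
    (hlen : x.length = 2 * n) (hw : x.count true = n)
    (hone : ((Finset.range (2 * n + 1)).filter
      (fun k => (x.take k).count true < (x.take k).count false)).card = 1) :
    ∃! p : List Bool × List Bool,
      isDyck p.1 ∧ isDyck p.2 ∧ x = p.1 ++ [false, true] ++ p.2 :=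
  stmt_4_general n x hlen hw hone
end

section
/- The map sending a Dyck word x with canonical decomposition x = 1u0v to u01v is a bijection from D_n to D_n^-. -/
/-
Every nonempty Dyck word is `1u0v` with `u, v` Dyck (cut at the first return to height zero),
and every word of `D_n^-` is `u01v` with `u, v` Dyck (cut around its unique prefix with more 0s
than 1s, which must be followed by a 1). Conversely, the only prefix of `u01v` with more 0s than
1s is `u0`; so `u01v ∈ D_n^-`, and `u01v` determines `|u|`, hence `u` and `v`, which makes the map
injective.
-/

open List

lemma count_take_append {α : Type*} [BEq α] (a : α) (k : ℕ) (l₁ l₂ : List α) :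
    ((l₁ ++ l₂).take k).count a =
      (l₁.take k).count a + (l₂.take (k - l₁.length)).count a := by
  rw [take_append, count_append]

lemma isDyck_of_forall_le_length {x : List Bool} (hbal : x.count true = x.count false)
    (hpre : ∀ k ≤ x.length, (x.take k).count false ≤ (x.take k).count true) : isDyck x := by
  refine ⟨hbal, fun k => ?_⟩
  rcases le_total k x.length with hk | hk
  · exact hpre k hk
  · rw [take_of_length_le hk, hbal]

lemma isDyck.append {a b : List Bool} (ha : isDyck a) (hb : isDyck b) : isDyck (a ++ b) := by
  refine ⟨by simp only [count_append, ha.1, hb.1], fun k => ?_⟩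
  simp only [count_take_append]
  rcases le_total a.length k with hk | hk
  · rw [take_of_length_le hk]
    have := hb.2 (k - a.length)
    have := ha.1
    omega
  · rw [Nat.sub_eq_zero_of_le hk, take_zero]
    simpa using ha.2 k

lemma isDyck.nest {u : List Bool} (hu : isDyck u) : isDyck ([true] ++ u ++ [false]) := by
  refine ⟨by simp [hu.1], fun k => ?_⟩
  cases k with
  | zero => simp
  | succ j =>
    have hfalse :=
      ((take_sublist (j - u.length) [false]).count_le false).trans_eq count_singleton_self
    have := hu.2 j
    simp [take_succ_cons, count_take_append]
    omega

lemma isDyck_of_append_left {p w : List Bool} (hp : p.count true = p.count false)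
    (hbal : (p ++ w).count true = (p ++ w).count false)
    (hpre : ∀ j ≤ w.length, ((p ++ w).take (p.length + j)).count false ≤
      ((p ++ w).take (p.length + j)).count true) :
    isDyck w := by
  rw [count_append, count_append] at hbal
  refine isDyck_of_forall_le_length (by omega) fun j hj => ?_
  have := hpre j hj
  rw [take_length_add_append, count_append, count_append] at this
  omega

lemma exists_dyck_append_false_of_first_deficient {y : List Bool} {m : ℕ}
    (hdef : (y.take (m + 1)).count true < (y.take (m + 1)).count false)
    (hpre : ∀ j ≤ m, (y.take j).count false ≤ (y.take j).count true) :
    ∃ u w, u.length = m ∧ isDyck u ∧ y = u ++ false :: w := by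
  have hm := hpre m le_rfl
  have hlt : m < y.length := by
    by_contra! h
    rw [take_of_length_le h] at hm
    rw [take_of_length_le (by omega)] at hdef
    omega
  have hstep : y.take (m + 1) = y.take m ++ [y[m]] := by
    rw [take_add_one, getElem?_eq_getElem hlt]; rfl
  have hym : y[m] = false := by
    by_contra h
    rw [hstep, eq_true_of_ne_false h] at hdef
    simp at hdef
    omega
  have hbal : (y.take m).count true = (y.take m).count false := by
    rw [hstep, hym] at hdef
    simp at hdef
    omega
  refine ⟨y.take m, y.drop (m + 1), length_take_of_le hlt.le, ⟨hbal, fun j => ?_⟩, ?_⟩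
  · rw [take_take]; exact hpre _ (min_le_right _ _)
  · rw [← hym, getElem_cons_drop, take_append_drop]

lemma isDyck.exists_eq_nest_append {x : List Bool} (hx : isDyck x) (hne : x ≠ []) :
    ∃ u v, isDyck u ∧ isDyck v ∧ x = [true] ++ u ++ [false] ++ v := by
  obtain ⟨a, t, rfl⟩ := exists_cons_of_ne_nil hne
  obtain rfl : a = true := by
    have h1 := hx.2 1
    cases a
    · simp at h1
    · rfl
  have hdef : ∃ k, (t.take k).count true < (t.take k).count false :=
    ⟨t.length, by have := hx.1; simp at this; rw [take_length]; omega⟩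
  obtain ⟨m, hm⟩ : ∃ m, Nat.find hdef = m + 1 :=
    Nat.exists_eq_add_one.mpr (Nat.pos_of_ne_zero fun h => by simpa [h] using Nat.find_spec hdef)
  obtain ⟨u, w, -, hu, rfl⟩ := exists_dyck_append_false_of_first_deficient
    (hm ▸ Nat.find_spec hdef) fun j hj => not_lt.mp (Nat.find_min hdef (by omega))
  have hx' : isDyck ([true] ++ u ++ [false] ++ w) := by simpa using hx
  exact ⟨u, w, hu, isDyck_of_append_left (by simp [hu.1]) hx'.1 fun j _ => hx'.2 _, by simp⟩

lemma count_take_dyck_append_false_true_append_lt_iff {u v : List Bool} (hu : isDyck u)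
    (hv : isDyck v) (k : ℕ) :
    ((u ++ [false, true] ++ v).take k).count true <
      ((u ++ [false, true] ++ v).take k).count false ↔ k = u.length + 1 := by
  rw [append_assoc]
  rcases lt_trichotomy k (u.length + 1) with hk | rfl | hk
  · rw [take_append, Nat.sub_eq_zero_of_le (by omega)]
    simpa [hk.ne] using hu.2 k
  · rw [take_append, take_of_length_le (by omega)]
    simp [hu.1]
  · obtain ⟨j, rfl⟩ : ∃ j, k = u.length + (j + 2) := ⟨k - u.length - 2, by omega⟩
    rw [take_length_add_append]
    have := hv.2 j
    simp [take_succ_cons, hu.1]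
    omega

lemma dyck_append_false_true_append_inj {u₁ v₁ u₂ v₂ : List Bool} (hu₁ : isDyck u₁)
    (hv₁ : isDyck v₁) (hu₂ : isDyck u₂) (hv₂ : isDyck v₂)
    (h : u₁ ++ [false, true] ++ v₁ = u₂ ++ [false, true] ++ v₂) :
    u₁ = u₂ ∧ v₁ = v₂ := by
  have hlen : u₁.length = u₂.length := by
    have := count_take_dyck_append_false_true_append_lt_iff hu₂ hv₂ (u₁.length + 1)
    rw [← h, count_take_dyck_append_false_true_append_lt_iff hu₁ hv₁] at this
    simpa using this
  obtain ⟨hu, rfl⟩ := append_inj h (by simp [hlen])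
  exact ⟨append_cancel_right hu, rfl⟩

lemma dyck_append_false_true_append_mem_dyckWordsMinus {n : ℕ} {u v : List Bool}
    (hu : isDyck u) (hv : isDyck v) (hlen : u.length + v.length + 2 = 2 * n) :
    u ++ [false, true] ++ v ∈ dyckWordsMinus n := by
  refine ⟨by simp only [length_append, length_cons, length_nil]; omega, ?_, ?_⟩
  · have := count_true_add_count_false u
    have := count_true_add_count_false v
    have := hu.1
    have := hv.1
    simp
    omega
  · rw [Finset.card_eq_one]
    refine ⟨u.length + 1, Finset.ext fun k => ?_⟩
    rw [Finset.mem_filter, count_take_dyck_append_false_true_append_lt_iff hu hv, Finset.mem_range,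
      Finset.mem_singleton]
    omega

lemma exists_forall_count_take_lt_iff_of_mem_dyckWordsMinus {n : ℕ} {y : List Bool}
    (hy : y ∈ dyckWordsMinus n) :
    ∃ k ≤ 2 * n, ∀ j ≤ 2 * n, (y.take j).count true < (y.take j).count false ↔ j = k := by
  obtain ⟨k, hk⟩ := Finset.card_eq_one.mp hy.2.2
  have hmem := fun j => Finset.ext_iff.mp hk j
  simp only [Finset.mem_filter, Finset.mem_range, Finset.mem_singleton] at hmem
  exact ⟨k, by have := ((hmem k).2 rfl).1; omega,
    fun j hj => ⟨fun h => (hmem j).1 ⟨by omega, h⟩, fun h => ((hmem j).2 h).2⟩⟩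

lemma exists_eq_dyck_append_false_true_append {n : ℕ} {y : List Bool}
    (hy : y ∈ dyckWordsMinus n) :
    ∃ u v, isDyck u ∧ isDyck v ∧ y = u ++ [false, true] ++ v := by
  obtain ⟨k, hk_le, hlow⟩ := exists_forall_count_take_lt_iff_of_mem_dyckWordsMinus hy
  obtain ⟨hlen, htrue, -⟩ := hy
  have hfalse : y.count false = n := by have := count_true_add_count_false y; omega
  obtain ⟨m, rfl⟩ : ∃ m, k = m + 1 :=
    Nat.exists_eq_add_one.mpr (Nat.pos_of_ne_zero fun h => by simpa [h] using (hlow k hk_le).2 rfl)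
  obtain ⟨u, w, rfl, hu, rfl⟩ := exists_dyck_append_false_of_first_deficient
    ((hlow _ hk_le).2 rfl) fun j hj => not_lt.mp fun h => by have := (hlow j (by omega)).1 h; omega
  have hbal := hu.1
  obtain _ | ⟨c, v⟩ := w
  · simp at htrue hfalse
    omega
  have hlen' : u.length + 2 + v.length = 2 * n := by
    simp only [length_append, length_cons] at hlen
    omega
  obtain rfl : c = true := by
    by_contra hc
    have := (hlow (u.length + 2) (by omega)).1 (by
      rw [take_length_add_append (i := 2), eq_false_of_ne_true hc]
      simp
      omega)
    omega
  have hy : u ++ false :: true :: v = u ++ [false, true] ++ v := by simp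
  rw [hy] at htrue hfalse hlow
  refine ⟨u, v, hu, isDyck_of_append_left (p := u ++ [false, true]) (by simp [hbal]) (by omega)
    fun j hj => not_lt.mp fun h => ?_, hy⟩
  have := (hlow _ (by simp only [length_append, length_cons, length_nil]; omega)).1 h
  simp only [length_append, length_cons, length_nil] at this
  omega

/-- The map sending a Dyck word with canonical decomposition `1u0v` to `u01v` is a
bijection from `D_n` onto `D_n^-`. -/
theorem stmt_5 (n : ℕ) (hn : 1 ≤ n) (f : List Bool → List Bool)
    (hf : ∀ u v : List Bool, isDyck u → isDyck v →
      f ([true] ++ u ++ [false] ++ v) = u ++ [false, true] ++ v) :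
    Set.BijOn f (dyckWords n) (dyckWordsMinus n) := by
  have hdecomp : ∀ x ∈ dyckWords n,
      ∃ u v, isDyck u ∧ isDyck v ∧ x = [true] ++ u ++ [false] ++ v := by
    rintro x ⟨hlen, hx⟩
    exact hx.exists_eq_nest_append (by rintro rfl; simp at hlen; omega)
  refine ⟨?_, ?_, ?_⟩
  · intro x hx
    obtain ⟨u, v, hu, hv, rfl⟩ := hdecomp x hx
    rw [hf u v hu hv]
    refine dyck_append_false_true_append_mem_dyckWordsMinus hu hv ?_
    have := hx.1
    simp only [length_append, length_cons, length_nil] at this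
    omega
  · intro x₁ hx₁ x₂ hx₂ h
    obtain ⟨u₁, v₁, hu₁, hv₁, rfl⟩ := hdecomp x₁ hx₁
    obtain ⟨u₂, v₂, hu₂, hv₂, rfl⟩ := hdecomp x₂ hx₂
    rw [hf u₁ v₁ hu₁ hv₁, hf u₂ v₂ hu₂ hv₂] at h
    obtain ⟨rfl, rfl⟩ := dyck_append_false_true_append_inj hu₁ hv₁ hu₂ hv₂ h
    rfl
  · intro y hy
    obtain ⟨u, v, hu, hv, rfl⟩ := exists_eq_dyck_append_false_true_append hy
    refine ⟨[true] ++ u ++ [false] ++ v, ⟨?_, hu.nest.append hv⟩, hf u v hu hv⟩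
    have := hy.1
    simp only [length_append, length_cons, length_nil] at this ⊢
    omega
end

section
/- The tree rotation operation ρ on D_n given by ρ(1u0v) = u1v0 is a bijection from D_n to D_n. -/
open List DyckStep

def DyckStep.equivBool : DyckStep ≃ Bool where
  toFun | U => true | D => false
  invFun | true => U | false => D
  left_inv s := by cases s <;> rfl
  right_inv b := by cases b <;> rfl

@[simp] lemma DyckStep.equivBool_U : equivBool U = true := rfl
@[simp] lemma DyckStep.equivBool_D : equivBool D = false := rfl

namespace DyckWord

variable {p q q' u u' v v' : DyckWord}

lemma IsNested.eq_nil_of_toList_eq_append (hp : p.IsNested) {a b : List DyckStep}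
    (h : p.toList = a ++ b) (hb : b ≠ []) (ha : a.count U = a.count D) : a = [] := by
  by_contra ha₀
  have hlt := @hp.2 a.length (length_pos_iff.mpr ha₀)
    (by simp [h, length_pos_iff.mpr hb])
  simp only [h, take_left'] at hlt
  omega

lemma eq_of_toList_eq_append_of_isNested {a : List DyckStep} (hq : q.IsNested) (hq' : q' ≠ 0)
    (hu : u'.toList = u.toList ++ a) (hqa : q.toList = a ++ q'.toList) : u' = u := by
  have ha : a.count U = a.count D := by
    have := u'.count_U_eq_count_D
    rw [hu, count_append, count_append, u.count_U_eq_count_D] at this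
    omega
  ext1
  rw [hu, hq.eq_nil_of_toList_eq_append hqa (toList_ne_nil.mpr hq') ha, append_nil]

lemma eq_of_add_eq_add_of_isNested (hq : q.IsNested) (hq' : q'.IsNested)
    (h : u + q = u' + q') : u = u' := by
  rcases append_eq_append_iff.mp (congrArg toList h) with ⟨a, hu', hqa⟩ | ⟨a, hu, hqa⟩
  · exact (eq_of_toList_eq_append_of_isNested hq hq'.1 hu' hqa).symm
  · exact eq_of_toList_eq_append_of_isNested hq' hq.1 hu hqa

lemma add_nest_inj : u + v.nest = u' + v'.nest ↔ u = u' ∧ v = v' := by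
  refine ⟨fun h ↦ ?_, by rintro ⟨rfl, rfl⟩; rfl⟩
  obtain rfl := eq_of_add_eq_add_of_isNested .nest .nest h
  exact ⟨rfl, by simpa using congrArg insidePart (add_left_cancel h)⟩

def toBools (p : DyckWord) : List Bool := p.toList.map equivBool

lemma toBools_injective : Function.Injective toBools := fun _ _ h ↦
  DyckWord.ext (map_injective_iff.mpr equivBool.injective h)

@[simp] lemma toBools_add : (p + q).toBools = p.toBools ++ q.toBools := map_append ..

@[simp] lemma toBools_nest : p.nest.toBools = [true] ++ p.toBools ++ [false] := by
  simp [toBools, nest]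

lemma isDyck_toBools (p : DyckWord) : isDyck p.toBools := by
  have hcount (l : List DyckStep) (s : DyckStep) :
      (l.map equivBool).count (equivBool s) = l.count s :=
    count_map_of_injective _ _ equivBool.injective s
  refine ⟨hcount _ U ▸ hcount _ D ▸ p.count_U_eq_count_D, fun k ↦ ?_⟩
  rw [toBools, ← map_take]
  exact hcount _ D ▸ hcount _ U ▸ p.count_D_le_count_U k

lemma exists_toBools_eq {x : List Bool} (hx : isDyck x) : ∃ p : DyckWord, p.toBools = x := by
  have hcount (l : List Bool) (b : Bool) :
      (l.map equivBool.symm).count (equivBool.symm b) = l.count b :=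
    count_map_of_injective _ _ equivBool.symm.injective b
  refine ⟨⟨x.map equivBool.symm, hcount x true ▸ hcount x false ▸ hx.1, fun k ↦ ?_⟩, ?_⟩
  · rw [← map_take]
    exact hcount _ true ▸ hcount _ false ▸ hx.2 k
  · simp [toBools]

lemma exists_toBools_eq_and_apply_eq {f : List Bool → List Bool}
    (hf : ∀ u v : List Bool, isDyck u → isDyck v →
      f ([true] ++ u ++ [false] ++ v) = u ++ [true] ++ v ++ [false])
    {x : List Bool} (hx : isDyck x) (hx₀ : x ≠ []) :
    ∃ u v : DyckWord, x = (u.nest + v).toBools ∧ f x = (u + v.nest).toBools := by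
  obtain ⟨p, rfl⟩ := exists_toBools_eq hx
  have hp : p ≠ 0 := by rintro rfl; exact hx₀ rfl
  refine ⟨p.insidePart, p.outsidePart, by rw [nest_insidePart_add_outsidePart hp], ?_⟩
  conv_lhs => rw [← nest_insidePart_add_outsidePart hp]
  rw [toBools_add, toBools_nest, hf _ _ (isDyck_toBools _) (isDyck_toBools _)]
  simp

end DyckWord

open DyckWord in
/-- The tree rotation `ρ(1u0v) := u1v0` is a bijection from `D_n` to `D_n`. -/
theorem stmt_8 (n : ℕ) (hn : 1 ≤ n) (f : List Bool → List Bool)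
    (hf : ∀ u v : List Bool, isDyck u → isDyck v →
      f ([true] ++ u ++ [false] ++ v) = u ++ [true] ++ v ++ [false]) :
    Set.BijOn f (dyckWords n) (dyckWords n) := by
  have hrot : ∀ x ∈ dyckWords n, ∃ u v : DyckWord,
      x = (u.nest + v).toBools ∧ f x = (u + v.nest).toBools := fun x hx ↦
    exists_toBools_eq_and_apply_eq hf hx.2 (ne_nil_of_length_pos (by rw [hx.1]; omega))
  have hmaps : Set.MapsTo f (dyckWords n) (dyckWords n) := by
    intro x hx
    obtain ⟨u, v, rfl, hfx⟩ := hrot x hx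
    refine ⟨?_, hfx ▸ isDyck_toBools _⟩
    have hlen := hx.1
    rw [hfx]
    simp only [toBools_add, toBools_nest, length_append] at hlen ⊢
    omega
  have hfin : (dyckWords n).Finite := (finite_length_eq Bool (2 * n)).subset fun x hx ↦ hx.1
  refine (hfin.injOn_iff_bijOn_of_mapsTo hmaps).mp fun x hx y hy hxy ↦ ?_
  obtain ⟨u, v, rfl, hfx⟩ := hrot x hx
  obtain ⟨u', v', rfl, hfy⟩ := hrot y hy
  obtain ⟨rfl, rfl⟩ := add_nest_inj.mp (toBools_injective (hfx ▸ hfy ▸ hxy))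
  rfl
end

section
/- For a flippable pair, the map τ defined by τ(110w0v) = 101w0v maps the set T_n = {110w0v : w, v Dyck words, |w|+|v| = 2n-4} into D_n, and its image {101w0v : w, v Dyck words} is disjoint from T_n. -/
/-- `T_n ⊆ D_n` is the set of Dyck words of the form `110w0v` with `w`, `v` Dyck words. -/
def flipTreeSet (n : ℕ) : Set (List Bool) :=
  {x | ∃ w v : List Bool, isDyck w ∧ isDyck v ∧ w.length + v.length = 2 * n - 4 ∧
    x = [true, true, false] ++ w ++ [false] ++ v}

/- `101w0v` factors as the Dyck word `10` followed by the first-return decomposition `1w0v`;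
it is not in `T_n` because its second letter is `0`. -/

lemma isDyck_nil : isDyck [] := by
  simp [isDyck]

lemma isDyck.append_s9 {x y : List Bool} (hx : isDyck x) (hy : isDyck y) : isDyck (x ++ y) := by
  refine ⟨by simp only [List.count_append, hx.1, hy.1], fun k => ?_⟩
  rw [List.take_append]
  simp only [List.count_append]
  have hx_prefix := hx.2 k
  have hy_prefix := hy.2 (k - x.length)
  omega

lemma isDyck.wrap {w : List Bool} (hw : isDyck w) : isDyck ([true] ++ w ++ [false]) := by
  refine ⟨by simp [List.count_append, hw.1], fun k => ?_⟩
  cases k with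
  | zero => simp
  | succ m =>
    have hw_prefix := hw.2 m
    have h_last : (([false] : List Bool).take (m - w.length)).count false ≤
        (([false] : List Bool).take (m - w.length)).count true + 1 := by
      cases m - w.length <;> simp
    simpa [List.take_append, List.count_append, add_assoc] using Nat.add_le_add hw_prefix h_last

lemma true_false_append_notMem_flipTreeSet (n : ℕ) (u : List Bool) :
    [true, false] ++ u ∉ flipTreeSet n := by
  rintro ⟨w, v, -, -, -, h⟩
  simp at h

/-- The map `τ(110w0v) = 101w0v` maps `T_n` into `D_n`, and its image is disjoint
from `T_n`. -/
theorem stmt_9 (n : ℕ) (hn : 2 ≤ n) (w v : List Bool)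
    (hw : isDyck w) (hv : isDyck v) (hlen : w.length + v.length = 2 * n - 4) :
    ([true, false, true] ++ w ++ [false] ++ v) ∈ dyckWords n ∧
    ([true, false, true] ++ w ++ [false] ++ v) ∉ flipTreeSet n := by
  have hsplit : [true, false, true] ++ w ++ [false] ++ v
      = [true, false] ++ ([true] ++ w ++ [false] ++ v) := by simp
  rw [hsplit]
  refine ⟨⟨?_, isDyck_nil.wrap.append_s9 (hw.wrap.append_s9 hv)⟩,
    true_false_append_notMem_flipTreeSet n _⟩
  simp only [List.length_append, List.length_cons, List.length_nil]
  omega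
end

section
/- For any Dyck word x ∈ D_n with canonical decomposition x = 1u0v, starting at x and flipping the bit positions given by the flip sequence σ(x) one after the other produces a path P_σ(x) in the graph H_n whose last vertex is u01v ∈ D_n^-; in particular, every intermediate bitstring has weight n or n-1. -/
/-- Flip the bit at (1-indexed) position `p` of the bitstring `y`. -/
def flipAt (y : List Bool) (p : ℕ) : List Bool :=
  y.set (p - 1) (!(y.getD (p - 1) false))

/-- Two bitstrings differ in exactly one bit. -/
def differOne (x y : List Bool) : Prop :=
  x.length = y.length ∧ (List.zipWith xor x y).count true = 1

/-
For a Dyck word `w` and `a = |A| + 2`, the flip sequence `σ_a(w)` applied to `A 0 w B` moves the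
`0` across `w`, ending at `A w 0 B`, along a simple path that only touches positions
`a - 1, …, a + |w| - 1`, whose vertices all have weight `c` or `c + 1` (`c` the weight of the start),
and which avoids `A 1 w B`. This goes by induction along `w = 1u0v`: the recursion for `σ_a` glues
the paths for `u` and for `v` with four single flips, and the pieces are told apart by a fixed bit
(or, for `A 1 w B`, by the weight of a fixed prefix). The sequence `σ(1u0v)` is two flips followed
by `σ_2(u)`, which is the first half of such a gluing.
-/

namespace FlipSequence

@[simp] lemma length_flipAt (y : List Bool) (p : ℕ) : (flipAt y p).length = y.length := by
  simp [flipAt]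

lemma flipAt_append_cons {A R : List Bool} {c : Bool} {p : ℕ} (hp : p = A.length + 1) :
    flipAt (A ++ c :: R) p = A ++ (!c) :: R := by
  subst hp; simp [flipAt]

lemma take_flipAt_of_lt {m p : ℕ} (h : m < p) (y : List Bool) : (flipAt y p).take m = y.take m :=
  List.take_set_of_le (by omega)

-- `flipAt y 0` flips the first bit, since `0 - 1 = 0` in `ℕ`; hence `1 ≤ p`.
lemma drop_flipAt_of_le {m p : ℕ} (h₁ : 1 ≤ p) (h₂ : p ≤ m) (y : List Bool) :
    (flipAt y p).drop m = y.drop m :=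
  List.drop_set_of_lt (by omega)

lemma differOne_set_not_getD {y : List Bool} {i : ℕ} (h : i < y.length) :
    differOne y (y.set i (!(y.getD i false))) := by
  refine ⟨by simp, ?_⟩
  induction y generalizing i with
  | nil => simp at h
  | cons c t ih =>
    cases i with
    | zero => simp [List.count_eq_zero]
    | succ i => simpa [List.getD] using ih (by simpa using h)

lemma differOne_flipAt {y : List Bool} {p : ℕ} (h₁ : 1 ≤ p) (h₂ : p ≤ y.length) :
    differOne y (flipAt y p) :=
  differOne_set_not_getD (by omega)

@[simp] lemma length_foldl_flipAt (y : List Bool) (L : List ℕ) :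
    (L.foldl flipAt y).length = y.length := by
  induction L generalizing y with
  | nil => rfl
  | cons p L ih => simp [ih]

lemma differOne_foldl_take_succ {y : List Bool} {L : List ℕ}
    (hL : ∀ p ∈ L, 1 ≤ p ∧ p ≤ y.length) {k : ℕ} (hk : k < L.length) :
    differOne ((L.take k).foldl flipAt y) ((L.take (k + 1)).foldl flipAt y) := by
  obtain ⟨h₁, h₂⟩ := hL _ (List.getElem_mem hk)
  rw [List.take_add_one, List.getElem?_eq_getElem hk, Option.toList_some, List.foldl_append,
    List.foldl_cons, List.foldl_nil]
  exact differOne_flipAt h₁ (by simpa using h₂)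

def flipPath (y : List Bool) : List ℕ → List (List Bool)
  | [] => [y]
  | p :: L => y :: flipPath (flipAt y p) L

lemma flipPath_eq_map_range (y : List Bool) (L : List ℕ) :
    flipPath y L = (List.range (L.length + 1)).map (fun k => (L.take k).foldl flipAt y) := by
  induction L generalizing y with
  | nil => rfl
  | cons p L ih => simp [flipPath, ih, List.range_succ_eq_map, Function.comp_def]

lemma flipPath_append_cons (y : List Bool) (L M : List ℕ) (p : ℕ) :
    flipPath y (L ++ p :: M) = flipPath y L ++ flipPath (flipAt (L.foldl flipAt y) p) M := by
  induction L generalizing y with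
  | nil => rfl
  | cons q L ih => simp [flipPath, ih]

lemma foldl_take_mem_flipPath (y : List Bool) (L : List ℕ) {k : ℕ} (hk : k ≤ L.length) :
    (L.take k).foldl flipAt y ∈ flipPath y L := by
  rw [flipPath_eq_map_range]
  exact List.mem_map.2 ⟨k, List.mem_range.2 (by omega), rfl⟩

lemma take_eq_of_mem_flipPath {m : ℕ} {y z : List Bool} {L : List ℕ} (hL : ∀ p ∈ L, m < p)
    (hz : z ∈ flipPath y L) : z.take m = y.take m := by
  induction L generalizing y with
  | nil => simp_all [flipPath]
  | cons p L ih =>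
    rcases List.mem_cons.1 hz with rfl | hz
    · rfl
    · rw [ih (fun q hq => hL q (by simp [hq])) hz, take_flipAt_of_lt (hL p (by simp))]

lemma drop_eq_of_mem_flipPath {m : ℕ} {y z : List Bool} {L : List ℕ}
    (hL : ∀ p ∈ L, 1 ≤ p ∧ p ≤ m) (hz : z ∈ flipPath y L) : z.drop m = y.drop m := by
  induction L generalizing y with
  | nil => simp_all [flipPath]
  | cons p L ih =>
    rcases List.mem_cons.1 hz with rfl | hz
    · rfl
    · obtain ⟨h₁, h₂⟩ := hL p (by simp)
      rw [ih (fun q hq => hL q (by simp [hq])) hz, drop_flipAt_of_le h₁ h₂]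

-- Transported to Mathlib's `DyckWord` to use its first-return decomposition.
def boolEquivDyckStep : Bool ≃ DyckStep where
  toFun b := if b then .U else .D
  invFun d := d = .U
  left_inv b := by cases b <;> rfl
  right_inv d := by cases d <;> rfl

lemma isDyck_map_boolEquivDyckStep_symm (p : DyckWord) :
    isDyck (p.toList.map boolEquivDyckStep.symm) := by
  have hcount (l : List DyckStep) (d : DyckStep) :
      (l.map boolEquivDyckStep.symm).count (boolEquivDyckStep.symm d) = l.count d :=
    List.count_map_of_injective _ _ boolEquivDyckStep.symm.injective _
  exact ⟨(hcount _ .U).trans (p.count_U_eq_count_D.trans (hcount _ .D).symm), fun k => by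
    rw [← List.map_take]
    exact (hcount _ .D).trans_le ((p.count_D_le_count_U k).trans (hcount _ .U).ge)⟩

def dyckWordOfIsDyck {w : List Bool} (hw : isDyck w) : DyckWord where
  toList := w.map boolEquivDyckStep
  count_U_eq_count_D := by
    have hcount := List.count_map_of_injective w _ boolEquivDyckStep.injective
    exact (hcount true).trans (hw.1.trans (hcount false).symm)
  count_D_le_count_U k := by
    have hcount := List.count_map_of_injective (w.take k) _ boolEquivDyckStep.injective
    rw [← List.map_take]
    exact (hcount false).trans_le ((hw.2 k).trans (hcount true).ge)

lemma isDyck_eq_nil_or_eq_cons {w : List Bool} (hw : isDyck w) :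
    w = [] ∨ ∃ u v, isDyck u ∧ isDyck v ∧ w = true :: (u ++ false :: v) := by
  have hw' : (dyckWordOfIsDyck hw).toList.map boolEquivDyckStep.symm = w := by
    simp [dyckWordOfIsDyck]
  rcases eq_or_ne (dyckWordOfIsDyck hw) 0 with h | h
  · left
    rw [← hw', h]; rfl
  · right
    refine ⟨_, _, isDyck_map_boolEquivDyckStep_symm (dyckWordOfIsDyck hw).insidePart,
      isDyck_map_boolEquivDyckStep_symm (dyckWordOfIsDyck hw).outsidePart, ?_⟩
    conv_lhs => rw [← hw', ← DyckWord.nest_insidePart_add_outsidePart h]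
    change List.map _ ([DyckStep.U] ++ _ ++ [DyckStep.D] ++ _) = _
    simpa using ⟨rfl, rfl⟩

lemma two_mul_count_true_of_isDyck {w : List Bool} (hw : isDyck w) :
    2 * w.count true = w.length := by
  have := List.count_true_add_count_false w
  have := hw.1
  omega

-- `not_mem` is the extra invariant that keeps the glued paths of `IsZeroShift.node` simple.
structure IsZeroShift (L : List ℕ) (A w B : List Bool) : Prop where
  window : ∀ p ∈ L, A.length + 1 ≤ p ∧ p ≤ A.length + w.length + 1
  foldl_eq : L.foldl flipAt (A ++ false :: (w ++ B)) = A ++ (w ++ false :: B)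
  count_mem : ∀ z ∈ flipPath (A ++ false :: (w ++ B)) L,
    z.count true = (A ++ false :: (w ++ B)).count true ∨
      z.count true = (A ++ false :: (w ++ B)).count true + 1
  nodup : (flipPath (A ++ false :: (w ++ B)) L).Nodup
  not_mem : A ++ true :: (w ++ B) ∉ flipPath (A ++ false :: (w ++ B)) L

lemma isZeroShift_nil (A B : List Bool) : IsZeroShift [] A [] B where
  window := by simp
  foldl_eq := rfl
  count_mem := by simp [flipPath]
  nodup := List.nodup_singleton _
  not_mem := by simp [flipPath]

/- Two flips turn `P 1 u 0 R` into `P 0 u 1 R`, after which a zero shift across `u` ends at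
`P u 0 1 R`. For `P = []` this is `σ(1u0v)`, for `P = A 0` the first half of `σ_a(1u0v)`. -/
section Opening

variable {L : List ℕ} {P u R : List Bool} {p q : ℕ}

lemma flipAt_opening (hp : p = P.length + u.length + 2) :
    flipAt (P ++ true :: (u ++ false :: R)) p = P ++ true :: (u ++ true :: R) := by
  simpa using flipAt_append_cons (A := P ++ true :: u) (R := R) (c := false) (by grind)

lemma foldl_opening (h : IsZeroShift L P u (true :: R)) (hp : p = P.length + u.length + 2)
    (hq : q = P.length + 1) :
    (p :: q :: L).foldl flipAt (P ++ true :: (u ++ false :: R)) =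
      P ++ (u ++ false :: true :: R) := by
  rw [List.foldl_cons, List.foldl_cons, flipAt_opening hp, flipAt_append_cons hq]
  exact h.foldl_eq

lemma flipPath_opening (hp : p = P.length + u.length + 2) (hq : q = P.length + 1) :
    flipPath (P ++ true :: (u ++ false :: R)) (p :: q :: L) =
      (P ++ true :: (u ++ false :: R)) :: (P ++ true :: (u ++ true :: R)) ::
        flipPath (P ++ false :: (u ++ true :: R)) L := by
  rw [flipPath, flipPath, flipAt_opening hp, flipAt_append_cons hq]
  rfl

lemma count_mem_flipPath_opening (h : IsZeroShift L P u (true :: R))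
    (hp : p = P.length + u.length + 2) (hq : q = P.length + 1) :
    ∀ z ∈ flipPath (P ++ true :: (u ++ false :: R)) (p :: q :: L),
      z.count true = (P ++ true :: (u ++ false :: R)).count true ∨
        z.count true = (P ++ true :: (u ++ false :: R)).count true + 1 := by
  rw [flipPath_opening hp hq]
  rintro z (_ | ⟨_, _ | ⟨_, hz⟩⟩)
  · exact Or.inl rfl
  · right; grind
  · have := h.count_mem z hz
    grind

lemma nodup_flipPath_opening (h : IsZeroShift L P u (true :: R))
    (hp : p = P.length + u.length + 2) (hq : q = P.length + 1) :
    (flipPath (P ++ true :: (u ++ false :: R)) (p :: q :: L)).Nodup := by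
  rw [flipPath_opening hp hq]
  have hdrop : ∀ z ∈ flipPath (P ++ false :: (u ++ true :: R)) L,
      z.drop (P.length + u.length + 1) = true :: R := fun z hz => by
    rw [drop_eq_of_mem_flipPath (fun p hp => by have := h.window p hp; omega) hz]
    simpa using List.drop_left' (l₁ := P ++ false :: u) (l₂ := true :: R) (by grind)
  have hstart : (P ++ true :: (u ++ false :: R)).drop (P.length + u.length + 1) = false :: R := by
    simpa using List.drop_left' (l₁ := P ++ true :: u) (l₂ := false :: R) (by grind)
  refine List.nodup_cons.2 ⟨?_, List.nodup_cons.2 ⟨h.not_mem, h.nodup⟩⟩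
  simp only [List.mem_cons, not_or]
  exact ⟨by simp, fun hmem => by simpa [hstart] using hdrop _ hmem⟩

end Opening

section Node

variable {L₁ L₂ : List ℕ} {A u v B : List Bool}

-- `σ_a(1u0v)` for `a = |A| + 2`, given `L₁ = σ_{a+1}(u)` and `L₂ = σ_{a+|u|+2}(v)`.
def nodeFlips (A u : List Bool) (L₁ L₂ : List ℕ) : List ℕ :=
  (A.length + u.length + 3) :: (A.length + 2) ::
    (L₁ ++ (A.length + 1) :: (A.length + u.length + 3) :: L₂)

lemma foldl_node_opening (h₁ : IsZeroShift L₁ (A ++ [false]) u (true :: (v ++ B))) :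
    ((A.length + u.length + 3) :: (A.length + 2) :: L₁).foldl flipAt
        (A ++ false :: true :: (u ++ false :: (v ++ B))) =
      A ++ false :: (u ++ false :: true :: (v ++ B)) := by
  simpa using foldl_opening h₁ (by grind) (by simp)

lemma flipAt_node_closing :
    flipAt (A ++ true :: (u ++ false :: true :: (v ++ B))) (A.length + u.length + 3) =
      A ++ true :: (u ++ false :: false :: (v ++ B)) := by
  simpa using flipAt_append_cons (A := A ++ true :: (u ++ [false])) (R := v ++ B) (c := true)
    (by grind)

lemma flipPath_node (h₁ : IsZeroShift L₁ (A ++ [false]) u (true :: (v ++ B))) :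
    flipPath (A ++ false :: true :: (u ++ false :: (v ++ B))) (nodeFlips A u L₁ L₂) =
      flipPath (A ++ false :: true :: (u ++ false :: (v ++ B)))
          ((A.length + u.length + 3) :: (A.length + 2) :: L₁) ++
        (A ++ true :: (u ++ false :: true :: (v ++ B))) ::
          flipPath (A ++ true :: (u ++ false :: false :: (v ++ B))) L₂ := by
  refine (flipPath_append_cons _ ((A.length + u.length + 3) :: (A.length + 2) :: L₁) _ _).trans ?_
  rw [foldl_node_opening h₁, flipAt_append_cons rfl, Bool.not_false,
    flipPath.eq_2 (A ++ true :: _), flipAt_node_closing]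

lemma take_of_mem_flipPath_node_opening
    (h₁ : IsZeroShift L₁ (A ++ [false]) u (true :: (v ++ B))) :
    ∀ z ∈ flipPath (A ++ false :: true :: (u ++ false :: (v ++ B)))
        ((A.length + u.length + 3) :: (A.length + 2) :: L₁),
      z.take (A.length + 1) = A ++ [false] := fun z hz => by
  rw [take_eq_of_mem_flipPath (fun p hp => ?_) hz]
  · simpa using List.take_left' (l₁ := A ++ [false]) (l₂ := true :: (u ++ false :: (v ++ B)))
      (by simp)
  · rcases List.mem_cons.1 hp with rfl | hp
    · omega
    rcases List.mem_cons.1 hp with rfl | hp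
    · omega
    · have := h₁.window p hp
      grind

lemma take_of_mem_flipPath_node_closing (h₂ : IsZeroShift L₂ (A ++ true :: (u ++ [false])) v B)
    {m : ℕ} (hm : m ≤ A.length + u.length + 2) :
    ∀ z ∈ (A ++ true :: (u ++ false :: true :: (v ++ B))) ::
        flipPath (A ++ true :: (u ++ false :: false :: (v ++ B))) L₂,
      z.take m = (A ++ true :: (u ++ false :: true :: (v ++ B))).take m := fun z hz => by
  rw [← flipAt_node_closing, ← flipPath] at hz
  refine take_eq_of_mem_flipPath (fun p hp => ?_) hz
  rcases List.mem_cons.1 hp with rfl | hp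
  · omega
  · have := h₂.window p hp
    grind

lemma count_mem_flipPath_node (h₁ : IsZeroShift L₁ (A ++ [false]) u (true :: (v ++ B)))
    (h₂ : IsZeroShift L₂ (A ++ true :: (u ++ [false])) v B) :
    ∀ z ∈ flipPath (A ++ false :: true :: (u ++ false :: (v ++ B))) (nodeFlips A u L₁ L₂),
      z.count true = (A ++ false :: true :: (u ++ false :: (v ++ B))).count true ∨
        z.count true = (A ++ false :: true :: (u ++ false :: (v ++ B))).count true + 1 := by
  rw [flipPath_node h₁]
  intro z hz
  rcases List.mem_append.1 hz with hz | hz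
  · simpa using count_mem_flipPath_opening (p := A.length + u.length + 3) (q := A.length + 2) h₁
      (by grind) (by simp) z (by simpa using hz)
  rcases List.mem_cons.1 hz with rfl | hz
  · right; grind
  · have := h₂.count_mem z (by simpa using hz)
    grind

lemma nodup_flipPath_node (h₁ : IsZeroShift L₁ (A ++ [false]) u (true :: (v ++ B)))
    (h₂ : IsZeroShift L₂ (A ++ true :: (u ++ [false])) v B) :
    (flipPath (A ++ false :: true :: (u ++ false :: (v ++ B)))
      (nodeFlips A u L₁ L₂)).Nodup := by
  rw [flipPath_node h₁]
  refine List.nodup_append.2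
    ⟨?_, List.nodup_cons.2 ⟨by simpa using h₂.not_mem, by simpa using h₂.nodup⟩, ?_⟩
  · simpa using nodup_flipPath_opening h₁ (by grind) (by simp)
  · intro y hy z hz hyz
    have := (take_of_mem_flipPath_node_opening h₁ y hy).symm.trans
      (hyz ▸ take_of_mem_flipPath_node_closing h₂ (by omega) z hz)
    simp [List.take_append] at this

lemma not_mem_flipPath_node (h₁ : IsZeroShift L₁ (A ++ [false]) u (true :: (v ++ B)))
    (h₂ : IsZeroShift L₂ (A ++ true :: (u ++ [false])) v B) :
    A ++ true :: true :: (u ++ false :: (v ++ B)) ∉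
      flipPath (A ++ false :: true :: (u ++ false :: (v ++ B))) (nodeFlips A u L₁ L₂) := by
  rw [flipPath_node h₁, List.mem_append, not_or]
  constructor
  · intro hmem
    have := take_of_mem_flipPath_node_opening h₁ _ hmem
    simp [List.take_append] at this
  · intro hmem
    have htake :=
      take_of_mem_flipPath_node_closing h₂ (m := A.length + u.length + 2) le_rfl _ hmem
    have hT : (A ++ true :: true :: (u ++ false :: (v ++ B))).take (A.length + u.length + 2) =
        A ++ true :: true :: u := by
      simpa using List.take_left' (l₁ := A ++ true :: true :: u) (l₂ := false :: (v ++ B))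
        (by grind)
    have h₄ : (A ++ true :: (u ++ false :: true :: (v ++ B))).take (A.length + u.length + 2) =
        A ++ true :: (u ++ [false]) := by
      simpa using List.take_left' (l₁ := A ++ true :: (u ++ [false])) (l₂ := true :: (v ++ B))
        (by grind)
    rw [hT, h₄] at htake
    simpa using congrArg (List.count true) htake

theorem IsZeroShift.node (h₁ : IsZeroShift L₁ (A ++ [false]) u (true :: (v ++ B)))
    (h₂ : IsZeroShift L₂ (A ++ true :: (u ++ [false])) v B) :
    IsZeroShift (nodeFlips A u L₁ L₂) A (true :: (u ++ false :: v)) B := by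
  refine ⟨fun p hp => ?_, ?_, ?_, ?_, ?_⟩
  · simp only [nodeFlips, List.mem_cons, List.mem_append] at hp
    rcases hp with rfl | rfl | hp | rfl | rfl | hp
    · grind
    · simp
    · have := h₁.window p hp; grind
    · simp
    · grind
    · have := h₂.window p hp; grind
  · simp only [nodeFlips, List.cons_append, List.append_assoc]
    refine (List.foldl_append (l := (A.length + u.length + 3) :: (A.length + 2) :: L₁)).trans ?_
    rw [foldl_node_opening h₁, List.foldl_cons, flipAt_append_cons rfl, List.foldl_cons,
      Bool.not_false, flipAt_node_closing]
    simpa using h₂.foldl_eq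
  · simpa only [List.cons_append, List.append_assoc] using count_mem_flipPath_node h₁ h₂
  · simpa only [List.cons_append, List.append_assoc] using nodup_flipPath_node h₁ h₂
  · simpa only [List.cons_append, List.append_assoc] using not_mem_flipPath_node h₁ h₂

end Node

theorem isZeroShift_of_isDyck (s : ℕ → List Bool → List ℕ) (hs0 : ∀ a : ℕ, s a [] = [])
    (hsrec : ∀ (a : ℕ) (u' v' : List Bool), isDyck u' → isDyck v' →
      s a ([true] ++ u' ++ [false] ++ v') =
        [a + u'.length + 1, a] ++ s (a + 1) u' ++ [a - 1, a + u'.length + 1] ++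
          s (a + u'.length + 2) v')
    {w : List Bool} (hw : isDyck w) (A B : List Bool) :
    IsZeroShift (s (A.length + 2) w) A w B := by
  induction hN : w.length using Nat.strong_induction_on generalizing w A B with
  | _ N ih =>
  rcases isDyck_eq_nil_or_eq_cons hw with rfl | ⟨u, v, hu, hv, rfl⟩
  · rw [hs0]
    exact isZeroShift_nil A B
  have hlt : u.length < N ∧ v.length < N := by
    simp only [← hN, List.length_cons, List.length_append]; omega
  have h₁ := ih _ hlt.1 hu (A ++ [false]) (true :: (v ++ B)) rfl
  have h₂ := ih _ hlt.2 hv (A ++ true :: (u ++ [false])) B rfl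
  rw [show (A ++ [false]).length + 2 = A.length + 2 + 1 by simp] at h₁
  rw [show (A ++ true :: (u ++ [false])).length + 2 = A.length + 2 + u.length + 2 by grind]
    at h₂
  have hσ := hsrec (A.length + 2) u v hu hv
  simp only [List.cons_append, List.nil_append, List.append_assoc] at hσ
  rw [hσ, show A.length + 2 + u.length + 1 = A.length + u.length + 3 by omega,
    show A.length + 2 - 1 = A.length + 1 by omega]
  exact h₁.node h₂

lemma count_true_lt_count_false_take_iff {u v : List Bool} (hu : isDyck u) (hv : isDyck v)
    (k : ℕ) :
    ((u ++ false :: true :: v).take k).count true <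
        ((u ++ false :: true :: v).take k).count false ↔ k = u.length + 1 := by
  rcases lt_trichotomy k (u.length + 1) with hk | rfl | hk
  · rw [List.take_append_of_le_length (by omega)]
    exact iff_of_false (not_lt.2 (hu.2 k)) hk.ne
  · have : (u ++ false :: true :: v).take (u.length + 1) = u ++ [false] := by
      simpa using List.take_left' (l₁ := u ++ [false]) (l₂ := true :: v) (by simp)
    simp [this, hu.1]
  · obtain ⟨j, rfl⟩ : ∃ j, k = (u ++ [false, true]).length + j :=
      ⟨k - u.length - 2, by grind⟩
    have := List.take_length_add_append (l₁ := u ++ [false, true]) (l₂ := v) j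
    simp only [List.append_assoc, List.cons_append, List.nil_append] at this
    rw [this]
    have := hv.2 j
    have := hu.1
    grind

lemma mem_dyckWordsMinus {n : ℕ} {u v : List Bool} (hu : isDyck u) (hv : isDyck v)
    (hlen : u.length + v.length + 2 = 2 * n) : u ++ [false, true] ++ v ∈ dyckWordsMinus n := by
  have hfilter : (Finset.range (2 * n + 1)).filter (fun k =>
      ((u ++ [false, true] ++ v).take k).count true <
        ((u ++ [false, true] ++ v).take k).count false) = {u.length + 1} := by
    ext k
    simp only [List.append_assoc, List.cons_append, List.nil_append, Finset.mem_filter,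
      Finset.mem_range, count_true_lt_count_false_take_iff hu hv, Finset.mem_singleton]
    omega
  have := two_mul_count_true_of_isDyck hu
  have := two_mul_count_true_of_isDyck hv
  exact ⟨by grind, by grind, by rw [hfilter]; rfl⟩

end FlipSequence

open FlipSequence in
theorem stmt_12_general (n : ℕ) (s : ℕ → List Bool → List ℕ)
    (hs0 : ∀ a : ℕ, s a [] = [])
    (hsrec : ∀ (a : ℕ) (u' v' : List Bool), isDyck u' → isDyck v' →
      s a ([true] ++ u' ++ [false] ++ v') =
        [a + u'.length + 1, a] ++ s (a + 1) u' ++ [a - 1, a + u'.length + 1] ++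
          s (a + u'.length + 2) v')
    (u v : List Bool) (hu : isDyck u) (hv : isDyck v)
    (x : List Bool) (hx : x = [true] ++ u ++ [false] ++ v)
    (hlen : x.length = 2 * n) :
    ∀ σx : List ℕ, σx = [u.length + 2, 1] ++ s 2 u →
      (∀ k : ℕ, k < σx.length →
        differOne ((σx.take k).foldl flipAt x) ((σx.take (k + 1)).foldl flipAt x)) ∧
      ((List.range (σx.length + 1)).map (fun k => (σx.take k).foldl flipAt x)).Nodup ∧
      (∀ k : ℕ, k ≤ σx.length →
        ((σx.take k).foldl flipAt x).count true = n ∨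
        ((σx.take k).foldl flipAt x).count true = n + 1) ∧
      σx.foldl flipAt x = u ++ [false, true] ++ v ∧
      (u ++ [false, true] ++ v) ∈ dyckWordsMinus n := by
  rintro σx rfl
  have hshift : IsZeroShift (s 2 u) [] u (true :: v) :=
    isZeroShift_of_isDyck s hs0 hsrec hu [] (true :: v)
  have hp : u.length + 2 = ([] : List Bool).length + u.length + 2 := by simp
  have hq : 1 = ([] : List Bool).length + 1 := rfl
  rw [show x = [] ++ true :: (u ++ false :: v) by simpa using hx] at hlen ⊢
  simp only [List.nil_append, List.length_cons, List.length_append] at hlen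
  have hcount : (true :: (u ++ false :: v)).count true = n := by
    have := two_mul_count_true_of_isDyck hu
    have := two_mul_count_true_of_isDyck hv
    grind
  refine ⟨fun k hk => differOne_foldl_take_succ (fun p hp => ?_) hk, ?_, fun k hk => ?_,
    (foldl_opening hshift hp hq).trans (by simp), mem_dyckWordsMinus hu hv (by omega)⟩
  · simp only [List.cons_append, List.nil_append, List.mem_cons] at hp
    rcases hp with rfl | rfl | hp
    · simp
    · simp
    · have := hshift.window p hp; grind
  · rw [← flipPath_eq_map_range]
    exact nodup_flipPath_opening hshift hp hq
  · rw [← hcount]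
    exact count_mem_flipPath_opening hshift hp hq _ (foldl_take_mem_flipPath _ _ hk)

/-- For a Dyck word `x ∈ D_n` with canonical decomposition `x = 1u0v`, flipping the
bit positions of the flip sequence `σ(x) = (|u|+2, 1, σ₂(u))` one after the other
produces a path `P_σ(x)` in `H_n`: consecutive vertices differ in exactly one bit,
all vertices are distinct, every vertex has weight `n` or `n+1`, and the last vertex
is `u01v ∈ D_n^-`.  Here `s a x'` plays the role of `σ_a(x')`, required to satisfy
its defining recursion. -/
theorem stmt_12 (n : ℕ) (hn : 1 ≤ n) (s : ℕ → List Bool → List ℕ)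
    (hs0 : ∀ a : ℕ, s a [] = [])
    (hsrec : ∀ (a : ℕ) (u' v' : List Bool), isDyck u' → isDyck v' →
      s a ([true] ++ u' ++ [false] ++ v') =
        [a + u'.length + 1, a] ++ s (a + 1) u' ++ [a - 1, a + u'.length + 1] ++
          s (a + u'.length + 2) v')
    (u v : List Bool) (hu : isDyck u) (hv : isDyck v)
    (x : List Bool) (hx : x = [true] ++ u ++ [false] ++ v)
    (hlen : x.length = 2 * n) :
    ∀ σx : List ℕ, σx = [u.length + 2, 1] ++ s 2 u →
      (∀ k : ℕ, k < σx.length →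
        differOne ((σx.take k).foldl flipAt x) ((σx.take (k + 1)).foldl flipAt x)) ∧
      ((List.range (σx.length + 1)).map (fun k => (σx.take k).foldl flipAt x)).Nodup ∧
      (∀ k : ℕ, k ≤ σx.length →
        ((σx.take k).foldl flipAt x).count true = n ∨
        ((σx.take k).foldl flipAt x).count true = n + 1) ∧
      σx.foldl flipAt x = u ++ [false, true] ++ v ∧
      (u ++ [false, true] ++ v) ∈ dyckWordsMinus n :=
  stmt_12_general n s hs0 hsrec u v hu hv x hx hlen
end

section
/- The six bitstrings obtained from the pattern 1**w*v by substituting the three stars with the six 0/1-combinations that use both symbols (i.e., weights of the stars being 1 or 2) form a 6-cycle in the graph whose vertices are bitstrings of length 2n with weight n or n+1 and whose edges connect bitstrings differing in exactly one bit, for any Dyck words w, v with |w| + |v| = 2n - 3... (with the three starred positions being positions 2, 3, and |w|+4). -/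
/-- Substituting the three stars of the pattern `1**w*v`. -/
def starSub (w v : List Bool) (a b c : Bool) : List Bool :=
  [true, a, b] ++ w ++ [c] ++ v

lemma count_tf (l : List Bool) : l.count true + l.count false = l.length := by
  induction l with
  | nil => simp
  | cons a t ih => cases a <;> simp [List.count_cons] <;> omega

lemma zip_self (l : List Bool) : (List.zipWith xor l l).count true = 0 := by
  induction l with
  | nil => rfl
  | cons a t ih => simp [List.count_replicate]

lemma zip_pref (w x y : List Bool) :
    (List.zipWith xor (w ++ x) (w ++ y)).count true = (List.zipWith xor x y).count true := by
  induction w with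
  | nil => rfl
  | cons a t ih => simp [ih]

lemma starSub_inj (w v : List Bool) (a b c a' b' c' : Bool) :
    starSub w v a b c = starSub w v a' b' c' ↔ a = a' ∧ b = b' ∧ c = c' := by
  simp [starSub]

lemma starSub_count (w v : List Bool) (a b c : Bool) :
    (starSub w v a b c).count true =
      1 + a.toNat + b.toNat + c.toNat + w.count true + v.count true := by
  cases a <;> cases b <;> cases c <;> simp [starSub, List.count_cons, List.count_append] <;> omega

lemma starSub_len (w v : List Bool) (a b c : Bool) :
    (starSub w v a b c).length = w.length + v.length + 4 := by
  simp [starSub]; omega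

lemma differOne_starSub (w v : List Bool) (a b c a' b' c' : Bool)
    (h : (a != a').toNat + (b != b').toNat + (c != c').toNat = 1) :
    differOne (starSub w v a b c) (starSub w v a' b' c') := by
  refine ⟨by simp [starSub_len], ?_⟩
  have e1 : starSub w v a b c = true :: a :: b :: (w ++ (c :: v)) := by simp [starSub]
  have e2 : starSub w v a' b' c' = true :: a' :: b' :: (w ++ (c' :: v)) := by simp [starSub]
  rw [e1, e2]
  simp [List.count_cons, zip_pref, zip_self]
  revert h
  cases a <;> cases a' <;> cases b <;> cases b' <;> cases c <;> cases c' <;> simp [List.count_replicate]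


/-- For Dyck words `w`, `v` with `|w| + |v| = 2n - 4`, the six bitstrings obtained
from the pattern `1**w*v` by substituting the three stars with the six `0/1`
combinations using both symbols form a 6-cycle in the graph `H_n` whose vertices are
the bitstrings of length `2n` with weight `n` or `n+1`, adjacent iff they differ in
exactly one bit: the six vertices are distinct, each is a vertex of `H_n`, and in
the cyclic order `100, 110, 010, 011, 001, 101` consecutive ones are adjacent. -/
theorem stmt_15 (n : ℕ) (hn : 2 ≤ n) (w v : List Bool)
    (hw : isDyck w) (hv : isDyck v) (hlen : w.length + v.length = 2 * n - 4) :
    ∀ C : List (List Bool),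
      C = [starSub w v true false false, starSub w v true true false,
           starSub w v false true false, starSub w v false true true,
           starSub w v false false true, starSub w v true false true] →
      C.Nodup ∧
      (∀ y ∈ C, y.length = 2 * n ∧ (y.count true = n ∨ y.count true = n + 1)) ∧
      (∀ k : ℕ, k < 6 →
        differOne (C.getD k []) (C.getD ((k + 1) % 6) [])) := by
  intro C hC
  subst hC
  have hw2 : 2 * w.count true = w.length := by
    have := count_tf w; have := hw.1; omega
  have hv2 : 2 * v.count true = v.length := by
    have := count_tf v; have := hv.1; omega
  refine ⟨?_, ?_, ?_⟩
  · simp [List.nodup_cons, starSub_inj]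
  · intro y hy
    simp only [List.mem_cons, List.not_mem_nil, or_false] at hy
    rcases hy with rfl | rfl | rfl | rfl | rfl | rfl <;>
      refine ⟨by rw [starSub_len]; omega, ?_⟩ <;>
      rw [starSub_count] <;> simp [Bool.toNat] <;> omega
  · intro k hk
    interval_cases k <;>
      exact differOne_starSub w v _ _ _ _ _ _ (by decide)
end
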